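/- With the setup of the minuscule node ι and distinguished root γ, define W(γ) := { w ∈ W^P : wγ = −θ }. For every w ∈ W(γ), the product is length-subtractive: ℓ(w s_γ) = ℓ(w) − ℓ(s_γ). -/

import Mathlib

/- A combinatorial framework for reduced crystallographic root systems with a
chosen system of simple roots, realized inside a real inner product space.
Weyl group elements are represented as plain functions `V → V` that are
compositions of simple reflections; `len` is the Coxeter length. -/

noncomputable section
open Classical
open scoped RealInnerProductSpace

namespace Pp

variable {V : Type*} [NormedAddCommGroup V] [InnerProductSpace ℝ V]

/-- The coroot pairing `⟨x, α^∨⟩ = 2⟨x,α⟩/⟨α,α⟩`. -/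
def cpr (x α : V) : ℝ := 2 * ⟪x, α⟫ / ⟪α, α⟫

/-- The reflection `s_α`, as a plain function. -/
def sref (α : V) : V → V := fun x => x - cpr x α • α

/-- `w` is a product of `n` reflections in simple roots taken from `Δ`. -/
def IsWord (Δ : Finset V) (w : V → V) (n : ℕ) : Prop :=
  ∃ l : List V, l.length = n ∧ (∀ α ∈ l, α ∈ Δ) ∧ w = (l.map sref).foldr (· ∘ ·) id

/-- The Weyl group generated by the simple reflections, as a set of functions. -/
def Weyl (Δ : Finset V) : Set (V → V) := { w | ∃ n, IsWord Δ w n }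

/-- Coxeter length with respect to the simple system `Δ`. -/
def len (Δ : Finset V) (w : V → V) : ℕ := sInf { n | IsWord Δ w n }

/-- The positive roots: roots which are nonnegative combinations of the
simple roots in `Δ`.  For a sub-system `Δ' ⊆ Δ`, `Pos Φ Δ'` is the set of
positive roots supported on `Δ'`. -/
def Pos (Φ Δ : Finset V) : Finset V :=
  Φ.filter fun β => ∃ c : V → ℝ, (∀ α ∈ Δ, 0 ≤ c α) ∧ β = ∑ α ∈ Δ, c α • α

/-- Half sum of positive roots. -/
def rho (Φ Δ : Finset V) : V := (2:ℝ)⁻¹ • ∑ β ∈ Pos Φ Δ, β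

/-- The axioms of a reduced crystallographic root system `Φ` with simple
system `Δ`. -/
structure IsRS (Φ Δ : Finset V) : Prop where
  zero_not_mem : (0:V) ∉ Φ
  neg_mem : ∀ α ∈ Φ, -α ∈ Φ
  reduced : ∀ α ∈ Φ, ∀ t : ℝ, t • α ∈ (Φ : Set V) → t = 1 ∨ t = -1
  cryst : ∀ α ∈ Φ, ∀ β ∈ Φ, ∃ k : ℤ, (k : ℝ) = cpr α β
  refl_mem : ∀ α ∈ Φ, ∀ β ∈ Φ, sref α β ∈ Φ
  simple_mem : ∀ α ∈ Δ, α ∈ Φ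
  simple_indep : LinearIndependent ℝ (fun α : Δ => (α : V))
  pos_or_neg : ∀ β ∈ Φ, β ∈ Pos Φ Δ ∨ -β ∈ Pos Φ Δ

/-- `β` is a quantum root: `ℓ(s_β) = ⟨2ρ, β^∨⟩ - 1`. -/
def IsQuantum (Φ Δ : Finset V) (β : V) : Prop :=
  (len Δ (sref β) : ℝ) = cpr ((2:ℝ) • rho Φ Δ) β - 1

/-- Minimal length coset representatives `W^P`: elements of `W` mapping the
positive roots of the parabolic (`Pos Φ ΔP`) to positive roots. -/
def MinRep (Φ Δ ΔP : Finset V) (w : V → V) : Prop :=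
  w ∈ Weyl Δ ∧ ∀ β ∈ Pos Φ ΔP, w β ∈ Pos Φ Δ

/-- `θ` is the highest root. -/
def IsHighest (Φ Δ : Finset V) (θ : V) : Prop :=
  θ ∈ Pos Φ Δ ∧ ∀ β ∈ Φ, ∃ c : V → ℝ, (∀ α ∈ Δ, 0 ≤ c α) ∧ θ - β = ∑ α ∈ Δ, c α • α

/-- All roots have the same length. -/
def SimplyLaced (Φ : Finset V) : Prop := ∀ α ∈ Φ, ∀ β ∈ Φ, ⟪α, α⟫ = ⟪β, β⟫

/-- The node `ι ∈ Δ` is minuscule: the coefficient of `α_ι^∨` in every coroot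
is at most `1`. -/
def Minuscule (Φ Δ : Finset V) (ι : V) : Prop :=
  ∀ β ∈ Φ, ∀ c : V → ℝ,
    (2 / ⟪β, β⟫) • β = ∑ α ∈ Δ, c α • ((2 / ⟪α, α⟫) • α) → c ι ≤ 1

/-- The node `ι ∈ Δ` is cominuscule: the coefficient of `α_ι` in every
positive root is at most `1`. -/
def Cominuscule (Φ Δ : Finset V) (ι : V) : Prop :=
  ∀ β ∈ Pos Φ Δ, ∀ c : V → ℝ,
    ((∀ α ∈ Δ, 0 ≤ c α) ∧ β = ∑ α ∈ Δ, c α • α) → c ι ≤ 1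

/-- `(Φ, Δ)` is the root system of type `B_n` in the standard coordinates
given by the orthonormal family `e`. -/
def TypeBData (Φ Δ : Finset V) (n : ℕ) (e : Fin n → V) : Prop :=
  Orthonormal ℝ e ∧
  (Φ : Set V) =
    ({v | ∃ i j : Fin n, i ≠ j ∧ (v = e i - e j ∨ v = e i + e j ∨ v = -(e i + e j))} ∪
     {v | ∃ i : Fin n, v = e i ∨ v = -(e i)}) ∧
  (Δ : Set V) =
    ({v | ∃ i : Fin n, ∃ h : (i : ℕ) + 1 < n, v = e i - e ⟨(i : ℕ) + 1, h⟩} ∪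
     {v | ∃ h : 0 < n, v = e ⟨n - 1, by omega⟩})

/-- `(Φ, Δ)` is the root system of type `C_n` in the standard coordinates
given by the orthonormal family `e`. -/
def TypeCData (Φ Δ : Finset V) (n : ℕ) (e : Fin n → V) : Prop :=
  Orthonormal ℝ e ∧
  (Φ : Set V) =
    ({v | ∃ i j : Fin n, i ≠ j ∧ (v = e i - e j ∨ v = e i + e j ∨ v = -(e i + e j))} ∪
     {v | ∃ i : Fin n, v = (2:ℝ) • e i ∨ v = -((2:ℝ) • e i)}) ∧
  (Δ : Set V) =
    ({v | ∃ i : Fin n, ∃ h : (i : ℕ) + 1 < n, v = e i - e ⟨(i : ℕ) + 1, h⟩} ∪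
     {v | ∃ h : 0 < n, v = (2:ℝ) • e ⟨n - 1, by omega⟩})

/-- `γ` is the distinguished (quantum) root attached to the minuscule node
`ι`: `γ = α_ι` in the simply-laced case, `γ = α_{n-1} + 2α_n = e_{n-1} + e_n`
in type `B_n` (with `ι = n`), and `γ = θ = 2e_1` in type `C_n` (with `ι = 1`). -/
def DistinguishedGamma (Φ Δ : Finset V) (ι γ : V) : Prop :=
  (SimplyLaced Φ ∧ γ = ι) ∨
  (∃ n : ℕ, ∃ _h : 2 ≤ n, ∃ e : Fin n → V, TypeBData Φ Δ n e ∧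
    ι = e ⟨n - 1, by omega⟩ ∧ γ = e ⟨n - 2, by omega⟩ + e ⟨n - 1, by omega⟩) ∨
  (∃ n : ℕ, ∃ _h : 2 ≤ n, ∃ e : Fin n → V, TypeCData Φ Δ n e ∧
    ι = e ⟨0, by omega⟩ - e ⟨1, by omega⟩ ∧ γ = (2:ℝ) • e ⟨0, by omega⟩)

end Pp

/-! The length `ℓ(w)` equals the number of inversions `N(w) = #{β > 0 | wβ < 0}`, so it suffices
that every inversion of `s_γ` is an inversion of `w`: for an involution `u` with that property,
`u` maps the inversions of `w u` bijectively onto those of `w` that are not inversions of `u`,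
whence `N(w u) = N(w) - N(u)`. The inclusion holds because `wγ = -θ` turns `⟨β, γ⟩ > 0` into
`⟨wβ, θ⟩ < 0`, and the dominant root `θ` pairs nonnegatively with every positive root.
The distinguished root `γ` itself is positive by inspection in each case. -/

namespace Pp

open Finset

variable {V : Type*} [NormedAddCommGroup V] [InnerProductSpace ℝ V]

section Reflection

lemma cpr_add (x y α : V) : cpr (x + y) α = cpr x α + cpr y α := by
  simp only [cpr, inner_add_left]; ring

lemma cpr_smul (t : ℝ) (x α : V) : cpr (t • x) α = t * cpr x α := by
  simp only [cpr, real_inner_smul_left]; ring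

lemma cpr_pos_iff {x α : V} (hα : 0 < ⟪α, α⟫) : 0 < cpr x α ↔ 0 < ⟪x, α⟫ := by
  rw [cpr, div_pos_iff_of_pos_right hα]; constructor <;> intro h <;> linarith

lemma cpr_nonneg_iff {x α : V} (hα : 0 < ⟪α, α⟫) : 0 ≤ cpr x α ↔ 0 ≤ ⟪x, α⟫ := by
  rw [cpr, div_nonneg_iff]; constructor
  · rintro (⟨h, -⟩ | ⟨-, h⟩) <;> linarith
  · intro h; left; constructor <;> linarith

lemma isLinearMap_sref (α : V) : IsLinearMap ℝ (sref α) where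
  map_add x y := by simp only [sref, cpr_add, add_smul]; abel
  map_smul t x := by simp only [sref, cpr_smul, smul_sub, smul_smul]

lemma sref_self {α : V} (hα : ⟪α, α⟫ ≠ 0) : sref α α = -α := by
  simp only [sref, cpr]; field_simp; module

lemma sref_sref {α : V} (hα : ⟪α, α⟫ ≠ 0) (x : V) : sref α (sref α x) = x := by
  simp only [sref, cpr, inner_sub_left, real_inner_smul_left]; field_simp; module

lemma inner_sref_sref {α : V} (hα : ⟪α, α⟫ ≠ 0) (x y : V) :
    ⟪sref α x, sref α y⟫ = ⟪x, y⟫ := by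
  simp only [sref, cpr, inner_sub_left, inner_sub_right, real_inner_smul_left,
    real_inner_smul_right, real_inner_comm α]
  field_simp; ring

lemma sref_map_comp {w : V → V} (hlin : IsLinearMap ℝ w)
    (hw : ∀ x y, ⟪w x, w y⟫ = ⟪x, y⟫) (α : V) : sref (w α) ∘ w = w ∘ sref α := by
  funext x
  simp only [Function.comp_apply, sref, cpr, hw, hlin.map_sub, hlin.map_smul]

end Reflection

section Words

def wordProd (l : List V) : V → V := (l.map sref).foldr (· ∘ ·) id

lemma wordProd_cons (a : V) (l : List V) :
    wordProd (a :: l) = sref a ∘ wordProd l := rfl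

lemma wordProd_append (l l' : List V) : wordProd (l ++ l') = wordProd l ∘ wordProd l' := by
  induction l with
  | nil => rfl
  | cons a l ih => simp only [List.cons_append, wordProd_cons, ih]; rfl

variable {Δ : Finset V}

lemma IsWord.comp {w u : V → V} {m n : ℕ} (hw : IsWord Δ w m) (hu : IsWord Δ u n) :
    IsWord Δ (w ∘ u) (m + n) := by
  obtain ⟨l, rfl, hl, rfl⟩ := hw
  obtain ⟨l', rfl, hl', rfl⟩ := hu
  refine ⟨l ++ l', List.length_append, ?_, (wordProd_append l l').symm⟩
  simp only [List.mem_append]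
  rintro α (hα | hα)
  exacts [hl α hα, hl' α hα]

lemma isWord_sref {α : V} (hα : α ∈ Δ) : IsWord Δ (sref α) 1 :=
  ⟨[α], rfl, by simpa using hα, rfl⟩

lemma len_le {w : V → V} {n : ℕ} (hw : IsWord Δ w n) : len Δ w ≤ n := Nat.sInf_le hw

lemma isWord_len {w : V → V} (hw : w ∈ Weyl Δ) : IsWord Δ w (len Δ w) := Nat.sInf_mem hw

lemma len_id : len Δ (id : V → V) = 0 :=
  Nat.eq_zero_of_le_zero (len_le ⟨[], rfl, by simp, rfl⟩)

lemma comp_mem_weyl {w u : V → V} (hw : w ∈ Weyl Δ) (hu : u ∈ Weyl Δ) : w ∘ u ∈ Weyl Δ :=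
  ⟨_, (isWord_len hw).comp (isWord_len hu)⟩

lemma sref_mem_weyl_of_mem {α : V} (hα : α ∈ Δ) : sref α ∈ Weyl Δ := ⟨1, isWord_sref hα⟩

lemma weyl_induction {P : (V → V) → Prop} (hid : P id)
    (hstep : ∀ w ∈ Weyl Δ, ∀ α ∈ Δ, P w → P (w ∘ sref α)) {w : V → V} (hw : w ∈ Weyl Δ) :
    P w := by
  obtain ⟨-, l, -, hl, rfl⟩ := hw
  induction l using List.reverseRecOn with
  | nil => exact hid
  | append_singleton l α ih =>
    have hl' : ∀ β ∈ l, β ∈ Δ := fun β hβ => hl β (List.mem_append_left _ hβ)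
    rw [← wordProd, wordProd_append]
    exact hstep _ ⟨_, l, rfl, hl', rfl⟩ α (hl α (by simp)) (ih hl')

lemma isLinearMap_of_mem_weyl {w : V → V} (hw : w ∈ Weyl Δ) : IsLinearMap ℝ w := by
  refine weyl_induction ⟨fun _ _ => rfl, fun _ _ => rfl⟩ (fun w _ α _ hlin => ?_) hw
  exact ⟨fun x y => by simp [(isLinearMap_sref α).map_add, hlin.map_add],
    fun t x => by simp [(isLinearMap_sref α).map_smul, hlin.map_smul]⟩

end Words

def IsNonnegComb (Δ : Finset V) (x : V) : Prop :=
  ∃ c : V → ℝ, (∀ α ∈ Δ, 0 ≤ c α) ∧ x = ∑ α ∈ Δ, c α • α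

section Cone

variable {Φ Δ : Finset V}

lemma mem_pos_iff {β : V} : β ∈ Pos Φ Δ ↔ β ∈ Φ ∧ IsNonnegComb Δ β := mem_filter

lemma pos_subset : Pos Φ Δ ⊆ Φ := filter_subset _ _

lemma IsNonnegComb.add {x y : V} (hx : IsNonnegComb Δ x) (hy : IsNonnegComb Δ y) :
    IsNonnegComb Δ (x + y) := by
  obtain ⟨c, hc, rfl⟩ := hx
  obtain ⟨d, hd, rfl⟩ := hy
  exact ⟨c + d, fun α hα => add_nonneg (hc α hα) (hd α hα), by
    simp only [Pi.add_apply, add_smul, sum_add_distrib]⟩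

lemma IsNonnegComb.smul {x : V} (hx : IsNonnegComb Δ x) {t : ℝ} (ht : 0 ≤ t) :
    IsNonnegComb Δ (t • x) := by
  obtain ⟨c, hc, rfl⟩ := hx
  exact ⟨t • c, fun α hα => mul_nonneg ht (hc α hα), by simp only [smul_sum, smul_smul]; rfl⟩

lemma isNonnegComb_of_mem {α : V} (hα : α ∈ Δ) : IsNonnegComb Δ α :=
  ⟨fun v => if v = α then 1 else 0, fun _ _ => by dsimp only; split_ifs <;> norm_num, by
    rw [sum_eq_single_of_mem α hα fun β _ hβ => by simp [hβ]]; simp⟩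

lemma IsNonnegComb.inner_nonneg {x v : V} (hx : IsNonnegComb Δ x)
    (hv : ∀ α ∈ Δ, 0 ≤ ⟪v, α⟫) : 0 ≤ ⟪v, x⟫ := by
  obtain ⟨c, hc, rfl⟩ := hx
  rw [inner_sum]
  exact sum_nonneg fun α hα => by rw [real_inner_smul_right]; exact mul_nonneg (hc α hα) (hv α hα)

end Cone

def inversionSet (Φ Δ : Finset V) (w : V → V) : Finset V :=
  (Pos Φ Δ).filter fun β => -w β ∈ Pos Φ Δ

lemma mem_inversionSet {Φ Δ : Finset V} {w : V → V} {β : V} :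
    β ∈ inversionSet Φ Δ w ↔ β ∈ Pos Φ Δ ∧ -w β ∈ Pos Φ Δ := mem_filter

section Coordinates

variable {n : ℕ} {e : Fin n → V}

def staircase (e : Fin n → V) : V := ∑ i : Fin n, ((n : ℝ) - (i : ℕ)) • e i

lemma inner_staircase (he : Orthonormal ℝ e) (j : Fin n) : ⟪staircase e, e j⟫ = n - (j : ℕ) := by
  rw [real_inner_comm, staircase, he.inner_right_fintype]

lemma inner_staircase_pos (he : Orthonormal ℝ e) (j : Fin n) : 0 < ⟪staircase e, e j⟫ := by
  rw [inner_staircase he, sub_pos, Nat.cast_lt]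
  exact j.isLt

lemma inner_staircase_sub_succ (he : Orthonormal ℝ e) (i : Fin n) (hi : (i : ℕ) + 1 < n) :
    ⟪staircase e, e i - e ⟨i + 1, hi⟩⟫ = 1 := by
  rw [inner_sub_right, inner_staircase he, inner_staircase he]
  push_cast
  ring

end Coordinates

namespace IsRS

variable {Φ Δ : Finset V} (h : IsRS Φ Δ)
include h

lemma inner_self_pos {α : V} (hα : α ∈ Φ) : 0 < ⟪α, α⟫ :=
  real_inner_self_pos.2 fun h0 => h.zero_not_mem (h0 ▸ hα)

lemma inner_self_ne_zero {α : V} (hα : α ∈ Φ) : ⟪α, α⟫ ≠ 0 := (h.inner_self_pos hα).ne'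

lemma inner_map_map_of_mem_weyl {w : V → V} (hw : w ∈ Weyl Δ) (x y : V) :
    ⟪w x, w y⟫ = ⟪x, y⟫ := by
  refine weyl_induction (P := fun w => ∀ x y, ⟪w x, w y⟫ = ⟪x, y⟫) (fun _ _ => rfl)
    (fun w _ α hα hw x y => ?_) hw x y
  rw [Function.comp_apply, Function.comp_apply, hw,
    inner_sref_sref (h.inner_self_ne_zero (h.simple_mem α hα))]

lemma map_mem_of_mem_weyl {w : V → V} (hw : w ∈ Weyl Δ) {β : V} (hβ : β ∈ Φ) : w β ∈ Φ := by
  refine weyl_induction (P := fun w => ∀ β ∈ Φ, w β ∈ Φ) (fun _ hβ => hβ)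
    (fun w _ α hα hw β hβ => hw _ (h.refl_mem α (h.simple_mem α hα) β hβ)) hw β hβ

lemma sref_map_comp_of_mem_weyl {w : V → V} (hw : w ∈ Weyl Δ) (α : V) :
    sref (w α) ∘ w = w ∘ sref α :=
  sref_map_comp (isLinearMap_of_mem_weyl hw) (h.inner_map_map_of_mem_weyl hw) α

lemma coeff_eq_zero {c : V → ℝ} (hc : ∑ α ∈ Δ, c α • α = 0) {α : V} (hα : α ∈ Δ) :
    c α = 0 := by
  rw [← sum_coe_sort] at hc
  exact linearIndependent_iff'.mp h.simple_indep univ (fun a => c a) hc ⟨α, hα⟩ (mem_univ _)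

lemma eq_zero_of_isNonnegComb_neg {x : V} (hx : IsNonnegComb Δ x) (hnx : IsNonnegComb Δ (-x)) :
    x = 0 := by
  obtain ⟨c, hc, hcx⟩ := hx
  obtain ⟨d, hd, hdx⟩ := hnx
  have hsum : ∑ α ∈ Δ, (c α + d α) • α = 0 := by
    simp only [add_smul, sum_add_distrib, ← hcx, ← hdx, add_neg_cancel]
  rw [hcx]
  refine sum_eq_zero fun α hα => ?_
  have := h.coeff_eq_zero hsum hα
  rw [show c α = 0 by linarith [hc α hα, hd α hα], zero_smul]

lemma exists_eq_smul_of_add_eq_smul {x y α : V} (hα : α ∈ Δ) (hx : IsNonnegComb Δ x)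
    (hy : IsNonnegComb Δ y) {t : ℝ} (hxy : x + y = t • α) : ∃ s : ℝ, x = s • α := by
  obtain ⟨c, hc, rfl⟩ := hx
  obtain ⟨d, hd, rfl⟩ := hy
  refine ⟨c α, sum_eq_single_of_mem α hα fun β hβ hne => ?_⟩
  have hsum : ∑ β ∈ Δ, (c β + d β - if β = α then t else 0) • β = 0 := by
    simp only [sub_smul, add_smul, sum_sub_distrib, sum_add_distrib, ite_smul, zero_smul,
      sum_ite_eq', if_pos hα, hxy, sub_self]
  have := h.coeff_eq_zero hsum hβ
  rw [if_neg hne] at this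
  rw [show c β = 0 by linarith [hc β hβ, hd β hβ], zero_smul]

lemma neg_notMem_pos {β : V} (hβ : β ∈ Pos Φ Δ) : -β ∉ Pos Φ Δ := fun hn =>
  h.zero_not_mem <|
    h.eq_zero_of_isNonnegComb_neg (mem_pos_iff.1 hβ).2 (mem_pos_iff.1 hn).2 ▸ pos_subset hβ

lemma simple_mem_pos {α : V} (hα : α ∈ Δ) : α ∈ Pos Φ Δ :=
  mem_pos_iff.2 ⟨h.simple_mem α hα, isNonnegComb_of_mem hα⟩

lemma sref_involutive {α : V} (hα : α ∈ Φ) : Function.Involutive (sref α) :=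
  sref_sref (h.inner_self_ne_zero hα)

lemma sref_mem_pos {α β : V} (hα : α ∈ Δ) (hβ : β ∈ Pos Φ Δ) (hne : β ≠ α) :
    sref α β ∈ Pos Φ Δ := by
  have hαΦ := h.simple_mem α hα
  obtain ⟨hβΦ, hβc⟩ := mem_pos_iff.1 hβ
  refine (h.pos_or_neg _ (h.refl_mem α hαΦ β hβΦ)).resolve_right fun hneg => ?_
  obtain ⟨s, rfl⟩ := h.exists_eq_smul_of_add_eq_smul hα hβc (mem_pos_iff.1 hneg).2
    (t := cpr β α) (by simp only [sref]; abel)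
  rcases h.reduced α hαΦ s (by exact_mod_cast hβΦ) with rfl | rfl
  · exact hne (one_smul _ _)
  · exact h.neg_notMem_pos (h.simple_mem_pos hα) (by rwa [neg_one_smul] at hβ)

lemma eq_of_neg_sref_mem_pos {α β : V} (hα : α ∈ Δ) (hβ : β ∈ Pos Φ Δ)
    (hneg : -sref α β ∈ Pos Φ Δ) : β = α :=
  by_contra fun hne => h.neg_notMem_pos (h.sref_mem_pos hα hβ hne) hneg

lemma inversionSet_id : inversionSet Φ Δ id = ∅ :=
  filter_false_of_mem fun _ hβ => h.neg_notMem_pos hβ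

lemma inversionSet_sref_of_mem {α : V} (hα : α ∈ Δ) : inversionSet Φ Δ (sref α) = {α} := by
  ext β
  rw [mem_inversionSet, mem_singleton]
  constructor
  · rintro ⟨hβ, hneg⟩
    exact h.eq_of_neg_sref_mem_pos hα hβ hneg
  · rintro rfl
    rw [sref_self (h.inner_self_ne_zero (h.simple_mem β hα)), neg_neg]
    exact ⟨h.simple_mem_pos hα, h.simple_mem_pos hα⟩

lemma card_inversionSet_comp_add {u w : V → V} (hu : u ∈ Weyl Δ) (hinv : Function.Involutive u)
    (hw : w ∈ Weyl Δ) (hsub : inversionSet Φ Δ u ⊆ inversionSet Φ Δ w) :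
    (inversionSet Φ Δ (w ∘ u)).card + (inversionSet Φ Δ u).card =
      (inversionSet Φ Δ w).card := by
  have hpos_or_neg : ∀ β ∈ Pos Φ Δ, u β ∈ Pos Φ Δ ∨ -u β ∈ Pos Φ Δ := fun β hβ =>
    h.pos_or_neg _ (h.map_mem_of_mem_weyl hu (pos_subset hβ))
  have himg : inversionSet Φ Δ (w ∘ u) =
      (inversionSet Φ Δ w \ inversionSet Φ Δ u).image u := by
    ext x
    simp only [mem_image, mem_sdiff, mem_inversionSet, Function.comp_apply]
    constructor
    · rintro ⟨hx, hwux⟩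
      have hux : u x ∈ Pos Φ Δ := (hpos_or_neg x hx).resolve_right fun hneg => by
        have hinv_neg : -u x ∈ inversionSet Φ Δ u := mem_inversionSet.2
          ⟨hneg, by rwa [(isLinearMap_of_mem_weyl hu).map_neg, neg_neg, hinv]⟩
        have := (mem_inversionSet.1 (hsub hinv_neg)).2
        rw [(isLinearMap_of_mem_weyl hw).map_neg, neg_neg] at this
        exact h.neg_notMem_pos this hwux
      exact ⟨u x, ⟨⟨hux, hwux⟩, fun ⟨_, hneg⟩ => h.neg_notMem_pos hx (by rwa [hinv] at hneg)⟩,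
        hinv x⟩
    · rintro ⟨β, ⟨⟨hβ, hwβ⟩, hβu⟩, rfl⟩
      exact ⟨(hpos_or_neg β hβ).resolve_right fun hneg => hβu ⟨hβ, hneg⟩, by rwa [hinv]⟩
  rw [himg, card_image_of_injective _ hinv.injective, card_sdiff_of_subset hsub]
  have := card_le_card hsub
  omega

lemma card_inversionSet_comp_sref_add_one {α : V} (hα : α ∈ Δ) {w : V → V} (hw : w ∈ Weyl Δ)
    (hneg : -w α ∈ Pos Φ Δ) :
    (inversionSet Φ Δ (w ∘ sref α)).card + 1 = (inversionSet Φ Δ w).card := by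
  have hsub : inversionSet Φ Δ (sref α) ⊆ inversionSet Φ Δ w := by
    rw [h.inversionSet_sref_of_mem hα, singleton_subset_iff, mem_inversionSet]
    exact ⟨h.simple_mem_pos hα, hneg⟩
  simpa [h.inversionSet_sref_of_mem hα] using h.card_inversionSet_comp_add
    (sref_mem_weyl_of_mem hα) (h.sref_involutive (h.simple_mem α hα)) hw hsub

lemma comp_sref_comp_sref {α : V} (hα : α ∈ Φ) (w : V → V) : (w ∘ sref α) ∘ sref α = w := by
  rw [Function.comp_assoc, (h.sref_involutive hα).comp_self, Function.comp_id]

lemma comp_sref_apply_self {α : V} (hα : α ∈ Φ) {w : V → V} (hw : w ∈ Weyl Δ) :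
    (w ∘ sref α) α = -w α := by
  rw [Function.comp_apply, sref_self (h.inner_self_ne_zero hα),
    (isLinearMap_of_mem_weyl hw).map_neg]

/-- Exchange condition: the letter `b` of `l` at which the image of `α` turns negative
satisfies `b = t α` for the tail `t`, so it cancels against `s_α`. -/
lemma exists_isWord_comp_sref {α : V} (hα : α ∈ Δ) :
    ∀ l : List V, (∀ β ∈ l, β ∈ Δ) → -wordProd l α ∈ Pos Φ Δ →
      ∃ n, n + 1 = l.length ∧ IsWord Δ (wordProd l ∘ sref α) n
  | [], _, hneg => absurd hneg (h.neg_notMem_pos (h.simple_mem_pos hα))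
  | b :: t, hl, hneg => by
    have hb : b ∈ Δ := hl b List.mem_cons_self
    have ht : ∀ β ∈ t, β ∈ Δ := fun β hβ => hl β (List.mem_cons_of_mem _ hβ)
    have htW : wordProd t ∈ Weyl Δ := ⟨_, t, rfl, ht, rfl⟩
    by_cases htα : -wordProd t α ∈ Pos Φ Δ
    · obtain ⟨n, hn, hword⟩ := exists_isWord_comp_sref hα t ht htα
      exact ⟨1 + n, by simp only [List.length_cons]; omega, (isWord_sref hb).comp hword⟩
    · have hpos : wordProd t α ∈ Pos Φ Δ :=
        (h.pos_or_neg _ (h.map_mem_of_mem_weyl htW (h.simple_mem α hα))).resolve_right htα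
      have htαb : wordProd t α = b := h.eq_of_neg_sref_mem_pos hb hpos hneg
      have hdel : wordProd (b :: t) ∘ sref α = wordProd t := by
        rw [wordProd_cons, Function.comp_assoc, ← h.sref_map_comp_of_mem_weyl htW, htαb,
          ← Function.comp_assoc, (h.sref_involutive (h.simple_mem b hb)).comp_self,
          Function.id_comp]
      exact ⟨t.length, rfl, hdel ▸ ⟨t, rfl, ht, rfl⟩⟩

lemma len_comp_sref_add_one {α : V} (hα : α ∈ Δ) {w : V → V} (hw : w ∈ Weyl Δ)
    (hneg : -w α ∈ Pos Φ Δ) : len Δ (w ∘ sref α) + 1 = len Δ w := by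
  have hge : len Δ w ≤ len Δ (w ∘ sref α) + 1 := by
    have := len_le ((isWord_len (comp_mem_weyl hw (sref_mem_weyl_of_mem hα))).comp
      (isWord_sref hα))
    rwa [h.comp_sref_comp_sref (h.simple_mem α hα)] at this
  obtain ⟨l, hlen, hl, hwl⟩ := isWord_len hw
  change w = wordProd l at hwl
  subst hwl
  obtain ⟨n, hn, hword⟩ := h.exists_isWord_comp_sref hα l hl hneg
  have := len_le hword
  omega

theorem len_eq_card_inversionSet {w : V → V} (hw : w ∈ Weyl Δ) :
    len Δ w = (inversionSet Φ Δ w).card := by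
  refine weyl_induction (P := fun w => len Δ w = (inversionSet Φ Δ w).card)
    (by rw [len_id, h.inversionSet_id, card_empty]) (fun w hw α hα ih => ?_) hw
  have hαΦ := h.simple_mem α hα
  rcases h.pos_or_neg (w α) (h.map_mem_of_mem_weyl hw hαΦ) with hpos | hneg
  · have hws := comp_mem_weyl hw (sref_mem_weyl_of_mem hα)
    have hneg' : -(w ∘ sref α) α ∈ Pos Φ Δ := by rwa [h.comp_sref_apply_self hαΦ hw, neg_neg]
    have hlen := h.len_comp_sref_add_one hα hws hneg'
    have hcard := h.card_inversionSet_comp_sref_add_one hα hws hneg'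
    rw [h.comp_sref_comp_sref hαΦ] at hlen hcard
    omega
  · have hlen := h.len_comp_sref_add_one hα hw hneg
    have hcard := h.card_inversionSet_comp_sref_add_one hα hw hneg
    omega

lemma sum_sref_pos {α : V} (hα : α ∈ Δ) :
    ∑ β ∈ Pos Φ Δ, sref α β = ∑ β ∈ Pos Φ Δ, β - (2 : ℝ) • α := by
  have hαP := h.simple_mem_pos hα
  have hαα := h.inner_self_ne_zero (h.simple_mem α hα)
  have hinv := h.sref_involutive (h.simple_mem α hα)
  have hperm : ∀ β ∈ (Pos Φ Δ).erase α, sref α β ∈ (Pos Φ Δ).erase α := fun β hβ => by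
    obtain ⟨hne, hβP⟩ := mem_erase.1 hβ
    refine mem_erase.2 ⟨fun heq => h.neg_notMem_pos hαP ?_, h.sref_mem_pos hα hβP hne⟩
    have hβα : β = -α := by rw [← hinv β, heq, sref_self hαα]
    exact hβα ▸ hβP
  have hrest : ∑ β ∈ (Pos Φ Δ).erase α, sref α β = ∑ β ∈ (Pos Φ Δ).erase α, β :=
    sum_nbij' (sref α) (sref α) hperm hperm (fun β _ => hinv β) (fun β _ => hinv β)
      (fun _ _ => rfl)
  rw [← add_sum_erase _ _ hαP, ← add_sum_erase _ _ hαP, hrest, sref_self hαα, two_smul]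
  abel

lemma inner_sum_pos_of_mem {α : V} (hα : α ∈ Δ) : ⟪∑ β ∈ Pos Φ Δ, β, α⟫ = ⟪α, α⟫ := by
  have hαΦ := h.simple_mem α hα
  set S := ∑ β ∈ Pos Φ Δ, β
  have hS : sref α S = S - (2 : ℝ) • α := by
    rw [← h.sum_sref_pos hα]
    exact map_sum (IsLinearMap.mk' _ (isLinearMap_sref α)) _ _
  have hcpr : cpr S α = 2 := by
    refine smul_left_injective ℝ (fun h0 => h.zero_not_mem (h0 ▸ hαΦ)) ?_
    simpa [sref] using hS
  have := h.inner_self_ne_zero hαΦ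
  rw [cpr] at hcpr
  field_simp at hcpr
  linarith

lemma exists_simple_inner_pos {β : V} (hβ : β ∈ Pos Φ Δ) : ∃ α ∈ Δ, 0 < ⟪β, α⟫ := by
  by_contra! hle
  have := (mem_pos_iff.1 hβ).2.inner_nonneg (v := -β) fun α hα => by
    rw [inner_neg_left]; linarith [hle α hα]
  rw [inner_neg_left] at this
  linarith [h.inner_self_pos (pos_subset hβ)]

/-- Induction on the height `⟨β, 2ρ⟩`: a non-simple positive root `β` has a simple `α` with
`s_α β` positive and lower, and `s_β = s_α s_{s_α β} s_α`. -/
theorem sref_mem_weyl_of_mem_pos {β : V} (hβ : β ∈ Pos Φ Δ) : sref β ∈ Weyl Δ := by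
  set S := ∑ δ ∈ Pos Φ Δ, δ
  by_contra hβW
  obtain ⟨β, hβ', hmin⟩ := ((Pos Φ Δ).filter fun β => sref β ∉ Weyl Δ).exists_min_image
    (fun x => ⟪x, S⟫) ⟨β, mem_filter.2 ⟨hβ, hβW⟩⟩
  obtain ⟨hβ, hβW⟩ := mem_filter.1 hβ'
  obtain ⟨α, hα, hβα⟩ := h.exists_simple_inner_pos hβ
  have hαΦ := h.simple_mem α hα
  have hsα := sref_mem_weyl_of_mem hα
  have hlt : ⟪sref α β, S⟫ < ⟪β, S⟫ := by
    have := (cpr_pos_iff (h.inner_self_pos hαΦ)).2 hβα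
    rw [sref, inner_sub_left, real_inner_smul_left, real_inner_comm S α,
      h.inner_sum_pos_of_mem hα]
    nlinarith [h.inner_self_pos hαΦ]
  have hW : sref (sref α β) ∈ Weyl Δ := by
    by_contra hW
    have hne : β ≠ α := fun e => hβW (e ▸ hsα)
    exact not_le.2 hlt (hmin _ (mem_filter.2 ⟨h.sref_mem_pos hα hβ hne, hW⟩))
  have hconj := h.sref_map_comp_of_mem_weyl hsα (sref α β)
  rw [h.sref_involutive hαΦ β] at hconj
  have : sref β = (sref α ∘ sref (sref α β)) ∘ sref α := by
    rw [← hconj, h.comp_sref_comp_sref hαΦ]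
  exact hβW (this ▸ comp_mem_weyl (comp_mem_weyl hsα hW) hsα)

lemma mem_pos_of_inner_pos {x v : V} (hx : x ∈ Φ) (hv : ∀ α ∈ Δ, 0 ≤ ⟪v, α⟫)
    (hvx : 0 < ⟪v, x⟫) : x ∈ Pos Φ Δ :=
  (h.pos_or_neg x hx).resolve_right fun hneg => by
    have := (mem_pos_iff.1 hneg).2.inner_nonneg hv
    rw [inner_neg_right] at this
    linarith

lemma inner_nonneg_of_isHighest {θ : V} (hθ : IsHighest Φ Δ θ) {α : V} (hα : α ∈ Δ) :
    0 ≤ ⟪θ, α⟫ := by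
  have hαΦ := h.simple_mem α hα
  rw [← cpr_nonneg_iff (h.inner_self_pos hαΦ)]
  by_contra! hneg
  have hcomb : IsNonnegComb Δ (θ - sref α θ) := hθ.2 _ (h.refl_mem α hαΦ θ (pos_subset hθ.1))
  simp only [sref, sub_sub_cancel] at hcomb
  have hcomb' : IsNonnegComb Δ (-(cpr θ α • α)) := by
    rw [← neg_smul]
    exact (isNonnegComb_of_mem hα).smul (by linarith)
  rcases smul_eq_zero.1 (h.eq_zero_of_isNonnegComb_neg hcomb hcomb') with h0 | h0
  · linarith
  · exact h.zero_not_mem (h0 ▸ hαΦ)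

lemma inversionSet_sref_subset {θ γ : V} (hθ : IsHighest Φ Δ θ) (hγ : γ ∈ Pos Φ Δ)
    {w : V → V} (hw : w ∈ Weyl Δ) (hwγ : w γ = -θ) :
    inversionSet Φ Δ (sref γ) ⊆ inversionSet Φ Δ w := by
  intro β hβinv
  obtain ⟨hβ, hneg⟩ := mem_inversionSet.1 hβinv
  have hγΦ := pos_subset hγ
  have hβγ : 0 < ⟪β, γ⟫ := by
    rw [← cpr_pos_iff (h.inner_self_pos hγΦ)]
    by_contra! hle
    have hcomb := (mem_pos_iff.1 hβ).2.add ((mem_pos_iff.1 hγ).2.smul (neg_nonneg.2 hle))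
    rw [neg_smul, ← sub_eq_add_neg] at hcomb
    exact h.neg_notMem_pos (mem_pos_iff.2 ⟨h.refl_mem γ hγΦ β (pos_subset hβ), hcomb⟩) hneg
  have hwβθ : ⟪w β, θ⟫ < 0 := by
    rw [← neg_neg θ, ← hwγ, inner_neg_right, h.inner_map_map_of_mem_weyl hw]
    linarith
  refine mem_inversionSet.2
    ⟨hβ, (h.pos_or_neg _ (h.map_mem_of_mem_weyl hw (pos_subset hβ))).resolve_left fun hpos => ?_⟩
  have := (mem_pos_iff.1 hpos).2.inner_nonneg fun α hα => h.inner_nonneg_of_isHighest hθ hα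
  rw [real_inner_comm] at this
  linarith

theorem mem_pos_of_distinguishedGamma {ι γ : V} (hι : ι ∈ Δ)
    (hγ : DistinguishedGamma Φ Δ ι γ) : γ ∈ Pos Φ Δ := by
  rcases hγ with ⟨-, rfl⟩ | ⟨n, hn, e, ⟨he, hΦ, hΔ⟩, -, rfl⟩ | ⟨n, hn, e, ⟨he, hΦ, hΔ⟩, -, rfl⟩
  · exact h.simple_mem_pos hι
  · have hγΦ : e ⟨n - 2, by omega⟩ + e ⟨n - 1, by omega⟩ ∈ (Φ : Set V) := by
      rw [hΦ]
      exact Or.inl ⟨_, _, by simp only [ne_eq, Fin.mk.injEq]; omega, Or.inr (Or.inl rfl)⟩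
    refine h.mem_pos_of_inner_pos (v := staircase e) hγΦ (fun α hα => ?_) ?_
    · rcases (hΔ ▸ mem_coe.2 hα : α ∈ _) with ⟨i, hi, rfl⟩ | ⟨-, rfl⟩
      · rw [inner_staircase_sub_succ he]; exact zero_le_one
      · exact (inner_staircase_pos he _).le
    · rw [inner_add_right]
      exact add_pos (inner_staircase_pos he _) (inner_staircase_pos he _)
  · have hγΦ : (2 : ℝ) • e ⟨0, by omega⟩ ∈ (Φ : Set V) := by
      rw [hΦ]
      exact Or.inr ⟨_, Or.inl rfl⟩
    refine h.mem_pos_of_inner_pos (v := staircase e) hγΦ (fun α hα => ?_) ?_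
    · rcases (hΔ ▸ mem_coe.2 hα : α ∈ _) with ⟨i, hi, rfl⟩ | ⟨-, rfl⟩
      · rw [inner_staircase_sub_succ he]; exact zero_le_one
      · rw [real_inner_smul_right]; exact mul_nonneg zero_le_two (inner_staircase_pos he _).le
    · rw [real_inner_smul_right]
      exact mul_pos two_pos (inner_staircase_pos he _)

theorem len_comp_sref_add_len {θ γ : V} (hθ : IsHighest Φ Δ θ) (hγ : γ ∈ Pos Φ Δ)
    {w : V → V} (hw : w ∈ Weyl Δ) (hwγ : w γ = -θ) :
    len Δ (w ∘ sref γ) + len Δ (sref γ) = len Δ w := by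
  have hsγ := h.sref_mem_weyl_of_mem_pos hγ
  rw [h.len_eq_card_inversionSet (comp_mem_weyl hw hsγ), h.len_eq_card_inversionSet hsγ,
    h.len_eq_card_inversionSet hw]
  exact h.card_inversionSet_comp_add hsγ (h.sref_involutive (pos_subset hγ)) hw
    (h.inversionSet_sref_subset hθ hγ hw hwγ)

end IsRS

end Pp

open Pp in
theorem stmt6_general {V : Type*} [NormedAddCommGroup V] [InnerProductSpace ℝ V]
    (Φ Δ : Finset V) (hRS : IsRS Φ Δ) (ι : V) (hι : ι ∈ Δ)
    (γ : V) (hγ : DistinguishedGamma Φ Δ ι γ)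
    (θ : V) (hθ : IsHighest Φ Δ θ)
    (w : V → V) (hw : MinRep Φ Δ (Δ.erase ι) w) (hwγ : w γ = -θ) :
    len Δ (w ∘ sref γ) + len Δ (sref γ) = len Δ w :=
  hRS.len_comp_sref_add_len hθ (hRS.mem_pos_of_distinguishedGamma hι hγ) hw.1 hwγ

open Pp in
/-- Proposition 2.3(1): for `w ∈ W(γ) = {w ∈ W^P : wγ = -θ}` one has
`ℓ(w s_γ) = ℓ(w) - ℓ(s_γ)` (stated additively). -/
theorem stmt6 {V : Type*} [NormedAddCommGroup V] [InnerProductSpace ℝ V]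
    (Φ Δ : Finset V) (hRS : IsRS Φ Δ) (ι : V) (hι : ι ∈ Δ)
    (hmin : Minuscule Φ Δ ι)
    (γ : V) (hγ : DistinguishedGamma Φ Δ ι γ)
    (θ : V) (hθ : IsHighest Φ Δ θ)
    (w : V → V) (hw : MinRep Φ Δ (Δ.erase ι) w) (hwγ : w γ = -θ) :
    len Δ (w ∘ sref γ) + len Δ (sref γ) = len Δ w :=
  stmt6_general Φ Δ hRS ι hι γ hγ θ hθ w hw hwγ
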